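/- arXiv:1802.08454 — 2 statements merged into one kernel-verified Lean document; each statement's English description precedes it below -/
import Mathlib

section
/- Soundness of the embedding (Theorem 1, right-to-left by contraposition): if a CJ formula φ is valid in every CJ model, then for every nonempty type i, relations av, pv : i → i → Prop, ob : (i → Prop) → (i → Prop) → Prop satisfying AV, PV1, PV2, OB1–OB5, and every interpretation of the propositional symbols as predicates on i, the embedded formula is valid: ∀ s : i, ⌊φ⌋ s. -/
/-- Formulas of the Carmo–Jones dyadic deontic logic. -/
inductive CJForm : Type where
  | atom : ℕ → CJForm
  | neg  : CJForm → CJForm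
  | disj : CJForm → CJForm → CJForm
  | box  : CJForm → CJForm
  | boxa : CJForm → CJForm
  | boxp : CJForm → CJForm
  /-- `cond φ ψ` represents ○(ψ/φ): "it ought to be ψ, given φ". -/
  | cond : CJForm → CJForm → CJForm
  | oblA : CJForm → CJForm
  | oblP : CJForm → CJForm

/-- A Carmo–Jones model over a (nonempty) type `S` of worlds. -/
structure CJModel (S : Type) where
  ne : Nonempty S
  av : S → Set S
  pv : S → Set S
  ob : Set S → Set (Set S)
  V  : ℕ → Set S
  av_nonempty : ∀ s, (av s).Nonempty
  av_sub_pv : ∀ s, av s ⊆ pv s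
  pv_refl : ∀ s, s ∈ pv s
  ob1 : ∀ X : Set S, ∅ ∉ ob X
  ob2 : ∀ X Y Z : Set S, Y ∩ X = Z ∩ X → (Y ∈ ob X ↔ Z ∈ ob X)
  ob3 : ∀ (β : Set (Set S)) (X : Set S), β ⊆ ob X → β.Nonempty →
        (⋂₀ β ∩ X).Nonempty → ⋂₀ β ∈ ob X
  ob4 : ∀ X Y Z : Set S, Y ⊆ X → Y ∈ ob X → X ⊆ Z → (Z \ X) ∪ Y ∈ ob Z
  ob5 : ∀ X Y Z : Set S, Y ⊆ X → Z ∈ ob X → (Y ∩ Z).Nonempty → Z ∈ ob Y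

/-- Satisfaction `M,s ⊨ δ` in a CJ model. -/
def CJModel.sat {S : Type} (M : CJModel S) : CJForm → S → Prop
  | .atom n, s => s ∈ M.V n
  | .neg φ, s => ¬ M.sat φ s
  | .disj φ ψ, s => M.sat φ s ∨ M.sat ψ s
  | .box φ, _ => {t | M.sat φ t} = (Set.univ : Set S)
  | .boxa φ, s => M.av s ⊆ {t | M.sat φ t}
  | .boxp φ, s => M.pv s ⊆ {t | M.sat φ t}
  | .cond φ ψ, _ => {t | M.sat ψ t} ∈ M.ob {t | M.sat φ t}
  | .oblA φ, s => {t | M.sat φ t} ∈ M.ob (M.av s) ∧ (M.av s ∩ {t | ¬ M.sat φ t}).Nonempty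
  | .oblP φ, s => {t | M.sat φ t} ∈ M.ob (M.pv s) ∧ (M.pv s ∩ {t | ¬ M.sat φ t}).Nonempty

/-- The shallow semantical embedding ⌊·⌋ of CJ formulas as predicates on a type
`i` of worlds, relative to `av`, `pv`, `ob` and an interpretation `val` of the
propositional symbols. -/
def emb {i : Type} (av pv : i → i → Prop) (ob : (i → Prop) → (i → Prop) → Prop)
    (val : ℕ → i → Prop) : CJForm → i → Prop
  | .atom n => val n
  | .neg φ => fun x => ¬ emb av pv ob val φ x
  | .disj φ ψ => fun x => emb av pv ob val φ x ∨ emb av pv ob val ψ x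
  | .box φ => fun _ => ∀ y, emb av pv ob val φ y
  | .boxa φ => fun x => ∀ y, av x y → emb av pv ob val φ y
  | .boxp φ => fun x => ∀ y, pv x y → emb av pv ob val φ y
  | .cond φ ψ => fun _ => ob (emb av pv ob val φ) (emb av pv ob val ψ)
  | .oblA φ => fun x => ob (av x) (emb av pv ob val φ) ∧ ∃ y, av x y ∧ ¬ emb av pv ob val φ y
  | .oblP φ => fun x => ob (pv x) (emb av pv ob val φ) ∧ ∃ y, pv x y ∧ ¬ emb av pv ob val φ y

/-- The axioms AV, PV1, PV2, OB1–OB5 on the embedding's parameters. -/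
def CJAxioms {i : Type} (av pv : i → i → Prop)
    (ob : (i → Prop) → (i → Prop) → Prop) : Prop :=
  (∀ w, ∃ v, av w v) ∧                                       -- AV
  (∀ w v, av w v → pv w v) ∧                                 -- PV1
  (∀ w, pv w w) ∧                                            -- PV2
  (∀ X : i → Prop, ¬ ob X (fun _ => False)) ∧                -- OB1
  (∀ X Y Z : i → Prop,                                       -- OB2
    (∀ w, (Y w ∧ X w) ↔ (Z w ∧ X w)) → (ob X Y ↔ ob X Z)) ∧
  (∀ (β : (i → Prop) → Prop) (X : i → Prop),                 -- OB3
    ((∀ Z, β Z → ob X Z) ∧ (∃ Z, β Z)) →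
    ((∃ y, (∀ Z, β Z → Z y) ∧ X y) → ob X (fun w => ∀ Z, β Z → Z w))) ∧
  (∀ X Y Z : i → Prop,                                       -- OB4
    ((∀ w, Y w → X w) ∧ ob X Y ∧ (∀ w, X w → Z w)) →
    ob Z (fun w => (Z w ∧ ¬ X w) ∨ Y w)) ∧
  (∀ X Y Z : i → Prop,                                       -- OB5
    ((∀ w, Y w → X w) ∧ ob X Z ∧ (∃ w, Y w ∧ Z w)) → ob Y Z)

/-- The accessibility relation of a CJ model, as a binary predicate. -/
def CJModel.avR {S : Type} (M : CJModel S) : S → S → Prop := fun w v => v ∈ M.av w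

def CJModel.pvR {S : Type} (M : CJModel S) : S → S → Prop := fun w v => v ∈ M.pv w

/-- The `ob` function of a CJ model, acting on predicates. -/
def CJModel.obR {S : Type} (M : CJModel S) : (S → Prop) → (S → Prop) → Prop :=
  fun X Y => {s | Y s} ∈ M.ob {s | X s}

def CJModel.val {S : Type} (M : CJModel S) : ℕ → S → Prop := fun n s => s ∈ M.V n

/-- The embedding induced by a CJ model `M` over its type of worlds. -/
def CJModel.emb {S : Type} (M : CJModel S) : CJForm → S → Prop :=
  _root_.emb M.avR M.pvR M.obR M.val

/-- Validity of an embedded formula: truth at every world. -/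
def vld {i : Type} (A : i → Prop) : Prop := ∀ s, A s

lemma sat_iff_emb {i : Type} (M : CJModel i) (φ : CJForm) (s : i) :
    M.sat φ s ↔ M.emb φ s := by
  induction φ generalizing s with
  | atom n => exact Iff.rfl
  | neg φ ih => exact not_congr (ih s)
  | disj φ ψ ih1 ih2 => exact or_congr (ih1 s) (ih2 s)
  | box φ ih =>
      show ({t | M.sat φ t} = Set.univ) ↔ (∀ y, M.emb φ y)
      rw [Set.eq_univ_iff_forall]
      exact forall_congr' fun y => by simpa using ih y
  | boxa φ ih =>
      constructor
      · intro hs y hy; exact (ih y).mp (hs hy)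
      · intro hs y hy; exact (ih y).mpr (hs y hy)
  | boxp φ ih =>
      constructor
      · intro hs y hy; exact (ih y).mp (hs hy)
      · intro hs y hy; exact (ih y).mpr (hs y hy)
  | cond φ ψ ih1 ih2 =>
      have e1 : {t | M.sat φ t} = {t | M.emb φ t} := Set.ext fun t => ih1 t
      have e2 : {t | M.sat ψ t} = {t | M.emb ψ t} := Set.ext fun t => ih2 t
      show ({t | M.sat ψ t} ∈ M.ob {t | M.sat φ t}) ↔
        ({t | M.emb ψ t} ∈ M.ob {t | M.emb φ t})
      rw [e1, e2]
  | oblA φ ih =>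
      have e : {t | M.sat φ t} = {t | M.emb φ t} := Set.ext fun t => ih t
      show ({t | M.sat φ t} ∈ M.ob (M.av s) ∧ (M.av s ∩ {t | ¬ M.sat φ t}).Nonempty) ↔
        ({t | M.emb φ t} ∈ M.ob (M.av s) ∧ ∃ y, y ∈ M.av s ∧ ¬ M.emb φ y)
      rw [e]
      refine and_congr Iff.rfl ⟨?_, ?_⟩
      · rintro ⟨y, hy1, hy2⟩; exact ⟨y, hy1, fun c => hy2 ((ih y).mpr c)⟩
      · rintro ⟨y, hy1, hy2⟩; exact ⟨y, hy1, fun c => hy2 ((ih y).mp c)⟩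
  | oblP φ ih =>
      have e : {t | M.sat φ t} = {t | M.emb φ t} := Set.ext fun t => ih t
      show ({t | M.sat φ t} ∈ M.ob (M.pv s) ∧ (M.pv s ∩ {t | ¬ M.sat φ t}).Nonempty) ↔
        ({t | M.emb φ t} ∈ M.ob (M.pv s) ∧ ∃ y, y ∈ M.pv s ∧ ¬ M.emb φ y)
      rw [e]
      refine and_congr Iff.rfl ⟨?_, ?_⟩
      · rintro ⟨y, hy1, hy2⟩; exact ⟨y, hy1, fun c => hy2 ((ih y).mpr c)⟩
      · rintro ⟨y, hy1, hy2⟩; exact ⟨y, hy1, fun c => hy2 ((ih y).mp c)⟩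

/-- Build a CJ model from data satisfying the axioms. -/
def mkModel {i : Type} (ne : Nonempty i) (av pv : i → i → Prop)
    (ob : (i → Prop) → (i → Prop) → Prop) (val : ℕ → i → Prop)
    (ax : CJAxioms av pv ob) : CJModel i where
  ne := ne
  av := fun s => {v | av s v}
  pv := fun s => {v | pv s v}
  ob := fun X => {Y | ob (fun s => s ∈ X) (fun s => s ∈ Y)}
  V := fun n => {s | val n s}
  av_nonempty := fun s => ax.1 s
  av_sub_pv := fun s v hv => ax.2.1 s v hv
  pv_refl := fun s => ax.2.2.1 s
  ob1 := by
    intro X hX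
    exact ax.2.2.2.1 (fun s => s ∈ X)
      ((ax.2.2.2.2.1 _ _ _ (fun w => by simp)).mp hX)
  ob2 := by
    intro X Y Z hYZ
    exact ax.2.2.2.2.1 _ _ _ (fun w => by
      have := Set.ext_iff.mp hYZ w
      simpa using this)
  ob3 := by
    intro β X hβ ⟨Y0, hY0⟩ ⟨y, hy1, hy2⟩
    have key := ax.2.2.2.2.2.1 (fun Z : i → Prop => {s | Z s} ∈ β) (fun s => s ∈ X)
      ⟨fun Z hZ => hβ hZ, fun s => s ∈ Y0, hY0⟩
      ⟨y, fun Z hZ => hy1 _ hZ, hy2⟩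
    have e : (fun w => ∀ Z : i → Prop, {s | Z s} ∈ β → Z w) = (fun w => w ∈ ⋂₀ β) := by
      funext w
      apply propext
      constructor
      · intro hw T hT
        exact hw (fun s => s ∈ T) hT
      · intro hw Z hZ
        exact hw _ hZ
    show ob (fun s => s ∈ X) (fun s => s ∈ ⋂₀ β)
    rw [← e]
    exact key
  ob4 := by
    intro X Y Z hYX hY hXZ
    have key := ax.2.2.2.2.2.2.1 (fun s => s ∈ X) (fun s => s ∈ Y) (fun s => s ∈ Z)
      ⟨fun w hw => hYX hw, hY, fun w hw => hXZ hw⟩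
    have e : (fun w => (w ∈ Z ∧ ¬ w ∈ X) ∨ w ∈ Y) = (fun w => w ∈ (Z \ X) ∪ Y) := by
      funext w; apply propext; simp [Set.mem_diff]
    show ob _ _
    rw [← e]
    exact key
  ob5 := by
    intro X Y Z hYX hZ ⟨w, hw1, hw2⟩
    exact ax.2.2.2.2.2.2.2 (fun s => s ∈ X) (fun s => s ∈ Y) (fun s => s ∈ Z)
      ⟨fun v hv => hYX hv, hZ, ⟨w, hw1, hw2⟩⟩

/-- **Soundness of the embedding** (Theorem 1, right-to-left): if a CJ formula
is valid in every CJ model, then the embedded formula is valid under every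
interpretation satisfying the axioms AV, PV1, PV2, OB1–OB5. -/
theorem soundness (φ : CJForm)
    (h : ∀ (S : Type) (M : CJModel S) (s : S), M.sat φ s) :
    ∀ (i : Type), Nonempty i → ∀ (av pv : i → i → Prop)
      (ob : (i → Prop) → (i → Prop) → Prop) (val : ℕ → i → Prop),
      CJAxioms av pv ob → ∀ s : i, emb av pv ob val φ s := by
  intro i ni av pv ob val ax s
  exact (sat_iff_emb (mkModel ni av pv ob val ax) φ s).mp (h i (mkModel ni av pv ob val ax) s)
end

section
/- Completeness of the embedding (Theorem 1, left-to-right by contraposition): if for every nonempty type i, relations av, pv : i → i → Prop, ob : (i → Prop) → (i → Prop) → Prop satisfying AV, PV1, PV2, OB1–OB5, and every interpretation of the propositional symbols as predicates on i, the embedded formula ⌊φ⌋ holds at every world s : i, then the CJ formula φ is valid in every CJ model. -/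
lemma CJModel.axioms {S : Type} (M : CJModel S) : CJAxioms M.avR M.pvR M.obR := by
  refine ⟨fun w => (M.av_nonempty w), fun w v h => M.av_sub_pv w h, fun w => M.pv_refl w,
    ?_, ?_, ?_, ?_, ?_⟩
  · intro X hX
    have hX' : ({s | False} : Set S) ∈ M.ob {s | X s} := hX
    have : ({s | False} : Set S) = ∅ := by ext s; simp
    exact M.ob1 _ (this ▸ hX')
  · intro X Y Z hYZ
    exact M.ob2 _ _ _ (by ext w; exact hYZ w)
  · intro β X ⟨h1, Z0, h2⟩ ⟨y, hy1, hy2⟩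
    have key := M.ob3 {A | ∃ Z, β Z ∧ A = {s | Z s}} {s | X s}
        (fun A ⟨Z, hZ, hA⟩ => hA ▸ h1 Z hZ) ⟨{s | Z0 s}, Z0, h2, rfl⟩
        ⟨y, fun A ⟨Z, hZ, hA⟩ => hA ▸ hy1 Z hZ, hy2⟩
    have heq : (⋂₀ {A | ∃ Z, β Z ∧ A = {s | Z s}} : Set S) = {w | ∀ Z, β Z → Z w} := by
      ext w
      constructor
      · intro hw Z hZ; exact hw {s | Z s} ⟨Z, hZ, rfl⟩
      · rintro hw A ⟨Z, hZ, rfl⟩; exact hw Z hZ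
    show ({w | ∀ Z, β Z → Z w} : Set S) ∈ M.ob {s | X s}
    exact heq ▸ key
  · intro X Y Z ⟨h1, h2, h3⟩
    have key := M.ob4 {s | X s} {s | Y s} {s | Z s} h1 h2 h3
    have heq : ({s | Z s} \ {s | X s} ∪ {s | Y s} : Set S)
        = {w | (Z w ∧ ¬ X w) ∨ Y w} := by ext w; rfl
    show ({w | (Z w ∧ ¬ X w) ∨ Y w} : Set S) ∈ M.ob {s | Z s}
    exact heq ▸ key
  · intro X Y Z ⟨h1, h2, ⟨w, hw1, hw2⟩⟩
    exact M.ob5 {s | X s} {s | Y s} {s | Z s} h1 h2 ⟨w, hw1, hw2⟩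

lemma CJModel.emb_iff_sat {S : Type} (M : CJModel S) :
    ∀ δ : CJForm, ∀ s : S, M.emb δ s ↔ M.sat δ s := by
  intro δ
  induction δ with
  | atom n => intro s; rfl
  | neg φ ih => intro s; exact not_congr (ih s)
  | disj φ ψ ih1 ih2 => intro s; exact or_congr (ih1 s) (ih2 s)
  | box φ ih =>
      intro s
      simp only [CJModel.emb, emb, CJModel.sat]
      constructor
      · intro h; ext t; simpa using (ih t).1 (h t)
      · intro h t; exact (ih t).2 (h ▸ Set.mem_univ t : t ∈ {u | M.sat φ u})
  | boxa φ ih =>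
      intro s
      constructor
      · intro h t ht; exact (ih t).1 (h t ht)
      · intro h t ht; exact (ih t).2 (h ht)
  | boxp φ ih =>
      intro s
      constructor
      · intro h t ht; exact (ih t).1 (h t ht)
      · intro h t ht; exact (ih t).2 (h ht)
  | cond φ ψ ih1 ih2 =>
      intro s
      have e1 : {t | M.emb φ t} = {t | M.sat φ t} := Set.ext ih1
      have e2 : {t | M.emb ψ t} = {t | M.sat ψ t} := Set.ext ih2
      show {t | M.emb ψ t} ∈ M.ob {t | M.emb φ t} ↔ _
      rw [e1, e2]; rfl
  | oblA φ ih =>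
      intro s
      have e : {t | M.emb φ t} = {t | M.sat φ t} := Set.ext ih
      show ({t | M.emb φ t} ∈ M.ob (M.av s) ∧ ∃ y, y ∈ M.av s ∧ ¬ M.emb φ y) ↔ _
      rw [e]
      constructor
      · rintro ⟨h1, y, hy1, hy2⟩; exact ⟨h1, y, hy1, fun hc => hy2 ((ih y).2 hc)⟩
      · rintro ⟨h1, y, hy1, hy2⟩; exact ⟨h1, y, hy1, fun hc => hy2 ((ih y).1 hc)⟩
  | oblP φ ih =>
      intro s
      have e : {t | M.emb φ t} = {t | M.sat φ t} := Set.ext ih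
      show ({t | M.emb φ t} ∈ M.ob (M.pv s) ∧ ∃ y, y ∈ M.pv s ∧ ¬ M.emb φ y) ↔ _
      rw [e]
      constructor
      · rintro ⟨h1, y, hy1, hy2⟩; exact ⟨h1, y, hy1, fun hc => hy2 ((ih y).2 hc)⟩
      · rintro ⟨h1, y, hy1, hy2⟩; exact ⟨h1, y, hy1, fun hc => hy2 ((ih y).1 hc)⟩

/-- **Completeness of the embedding** (Theorem 1, left-to-right): if the
embedded formula is valid under every interpretation satisfying the axioms
AV, PV1, PV2, OB1–OB5, then the CJ formula is valid in every CJ model. -/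
theorem completeness (φ : CJForm)
    (h : ∀ (i : Type), Nonempty i → ∀ (av pv : i → i → Prop)
      (ob : (i → Prop) → (i → Prop) → Prop) (val : ℕ → i → Prop),
      CJAxioms av pv ob → ∀ s : i, emb av pv ob val φ s) :
    ∀ (S : Type) (M : CJModel S) (s : S), M.sat φ s := by
  intro S M s
  exact (M.emb_iff_sat φ s).1 (h S M.ne M.avR M.pvR M.obR M.val M.axioms s)
end
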